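/- Let d ≥ 1, n = d(d+1), and let b_1, …, b_n be unit vectors in ℂ^d such that for every j ≠ k, |⟨b_j, b_k⟩|² equals either 0 or 1/d. Then for every index j, the number of indices k ≠ j with ⟨b_j, b_k⟩ = 0 is exactly d − 1 (i.e. the orthogonality graph of the vectors is (d−1)-regular). -/

import Mathlib

/-!
Send a unit vector `x ∈ ℂ^d` to the traceless part `Q x = x x* - I/d` of its projector, which lives
in the `(d² - 1)`-dimensional space of traceless matrices and satisfies
`⟪Q x, Q y⟫ = |⟪x, y⟫|² - 1/d`. Under the angle hypothesis the Gram matrix of the `Q (b j)` is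
`G = (1 - 1/d) I - A/d`, with `A` the adjacency matrix of the orthogonality graph, so that
`G_{jk} (G_{jk} + 1/d) = (1 - 1/d) δ_{jk}` and `∑ G_{jk}² + (∑ G_{jk}) / d = tr G = n (1 - 1/d)`.
For `n = d (d + 1)` we have `tr G = d² - 1`, and the frame-potential bound
`(tr G)² ≤ (d² - 1) ∑ G_{jk}²` forces `‖∑ Q (b j)‖² = ∑ G_{jk} ≤ 0`. Hence `∑ Q (b j) = 0`,
so every row sum `1 - 1/d - deg j / d` of `G` vanishes.
-/
open Finset Module
open scoped ComplexConjugate InnerProductSpace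

section FramePotential

variable {𝕜 E ι : Type*} [RCLike 𝕜] [NormedAddCommGroup E] [InnerProductSpace 𝕜 E]
  [FiniteDimensional 𝕜 E] [Fintype ι]

theorem sq_sum_norm_sq_le_finrank_mul_sum_norm_inner_sq (v : ι → E) :
    (∑ j, ‖v j‖ ^ 2) ^ 2 ≤ finrank 𝕜 E * ∑ j, ∑ k, ‖⟪v j, v k⟫_𝕜‖ ^ 2 := by
  set e := stdOrthonormalBasis 𝕜 E
  set S : E → E := fun x => ∑ j, ⟪v j, x⟫_𝕜 • v j
  have htrace : ∑ a, RCLike.re ⟪e a, S (e a)⟫_𝕜 = ∑ j, ‖v j‖ ^ 2 := by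
    have : ∑ a, ⟪e a, S (e a)⟫_𝕜 = ∑ j, ⟪v j, v j⟫_𝕜 := by
      simp only [S, inner_sum, inner_smul_right]
      rw [sum_comm]
      exact sum_congr rfl fun j _ => e.sum_inner_mul_inner _ _
    simpa only [map_sum, inner_self_eq_norm_sq] using congrArg RCLike.re this
  have hHS : ∑ a, ‖S (e a)‖ ^ 2 = ∑ j, ∑ k, ‖⟪v j, v k⟫_𝕜‖ ^ 2 := by
    have : ∑ a, ⟪S (e a), S (e a)⟫_𝕜 = ∑ j, ∑ k, ⟪v j, v k⟫_𝕜 * conj ⟪v j, v k⟫_𝕜 := by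
      simp only [S, inner_sum, sum_inner, inner_smul_right, inner_smul_left, inner_conj_symm]
      rw [sum_comm]
      refine sum_congr rfl fun j _ => ?_
      simp_rw [mul_sum]
      rw [sum_comm]
      refine sum_congr rfl fun k _ => ?_
      rw [← e.sum_inner_mul_inner (v j) (v k), sum_mul]
      exact sum_congr rfl fun a _ => by ring
    simp only [inner_self_eq_norm_sq_to_K, RCLike.mul_conj] at this
    exact_mod_cast this
  have hre : ∀ a, RCLike.re ⟪e a, S (e a)⟫_𝕜 ^ 2 ≤ ‖S (e a)‖ ^ 2 := fun a => by
    calc RCLike.re ⟪e a, S (e a)⟫_𝕜 ^ 2 ≤ ‖⟪e a, S (e a)⟫_𝕜‖ ^ 2 := by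
          rw [← sq_abs]; gcongr; exact RCLike.abs_re_le_norm _
      _ ≤ (‖e a‖ * ‖S (e a)‖) ^ 2 := by gcongr; exact norm_inner_le_norm _ _
      _ = ‖S (e a)‖ ^ 2 := by rw [e.orthonormal.1 a, one_mul]
  calc (∑ j, ‖v j‖ ^ 2) ^ 2 = (∑ a, RCLike.re ⟪e a, S (e a)⟫_𝕜) ^ 2 := by rw [htrace]
    _ ≤ finrank 𝕜 E * ∑ a, RCLike.re ⟪e a, S (e a)⟫_𝕜 ^ 2 := by
      simpa using sq_sum_le_card_mul_sum_sq (s := univ)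
        (f := fun a => RCLike.re ⟪e a, S (e a)⟫_𝕜)
    _ ≤ finrank 𝕜 E * ∑ a, ‖S (e a)‖ ^ 2 := by
      gcongr ?_ * ?_; exact sum_le_sum fun a _ => hre a
    _ = _ := by rw [hHS]

end FramePotential

section TracelessProjector

variable {𝕜 ι : Type*} [RCLike 𝕜] [Fintype ι] [DecidableEq ι]

/-- The matrix `x y*`, flattened so that the Frobenius inner product becomes the Euclidean one. -/
noncomputable def outerVec (x y : EuclideanSpace 𝕜 ι) : EuclideanSpace 𝕜 (ι × ι) :=
  WithLp.toLp 2 fun p => x p.1 * conj (y p.2)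

noncomputable def idVec : EuclideanSpace 𝕜 (ι × ι) :=
  WithLp.toLp 2 fun p => if p.1 = p.2 then 1 else 0

omit [DecidableEq ι] in
theorem inner_outerVec_self (x y : EuclideanSpace 𝕜 ι) :
    ⟪outerVec x x, outerVec y y⟫_𝕜 = (‖⟪x, y⟫_𝕜‖ ^ 2 : ℝ) := by
  rw [RCLike.ofReal_pow, ← RCLike.mul_conj]
  simp only [outerVec, PiLp.inner_apply, RCLike.inner_apply, Fintype.sum_prod_type, map_sum,
    map_mul, RCLike.conj_conj, sum_mul_sum]
  exact sum_congr rfl fun a _ => sum_congr rfl fun a' _ => by ring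

theorem inner_idVec_outerVec_self (x : EuclideanSpace 𝕜 ι) :
    ⟪idVec, outerVec x x⟫_𝕜 = (‖x‖ ^ 2 : ℝ) := by
  simp only [idVec, outerVec, PiLp.inner_apply, RCLike.inner_apply, Fintype.sum_prod_type,
    EuclideanSpace.norm_sq_eq, RCLike.ofReal_sum, RCLike.ofReal_pow, ← RCLike.mul_conj]
  simp

theorem inner_idVec_self : ⟪(idVec : EuclideanSpace 𝕜 (ι × ι)), idVec⟫_𝕜 = Fintype.card ι := by
  simp only [idVec, PiLp.inner_apply, RCLike.inner_apply, Fintype.sum_prod_type]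
  simp [apply_ite]

theorem finrank_orthogonal_idVec [Nonempty ι] :
    finrank 𝕜 (𝕜 ∙ (idVec : EuclideanSpace 𝕜 (ι × ι)))ᗮ = Fintype.card ι ^ 2 - 1 := by
  have hne : (idVec : EuclideanSpace 𝕜 (ι × ι)) ≠ 0 := by
    intro h
    have := inner_idVec_self (𝕜 := 𝕜) (ι := ι)
    simp only [h, inner_zero_left] at this
    exact Fintype.card_ne_zero (by exact_mod_cast this.symm)
  apply Submodule.finrank_add_finrank_orthogonal'
  rw [finrank_span_singleton hne, finrank_euclideanSpace, Fintype.card_prod, ← sq]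
  have := Nat.one_le_pow 2 _ (Fintype.card_pos (α := ι))
  omega

noncomputable def tracelessProjector (x : EuclideanSpace 𝕜 ι) : EuclideanSpace 𝕜 (ι × ι) :=
  outerVec x x - ((Fintype.card ι : 𝕜)⁻¹) • idVec

variable [Nonempty ι] {x y : EuclideanSpace 𝕜 ι}

theorem inner_tracelessProjector (hx : ‖x‖ = 1) (hy : ‖y‖ = 1) :
    ⟪tracelessProjector x, tracelessProjector y⟫_𝕜 =
      ((‖⟪x, y⟫_𝕜‖ ^ 2 - (Fintype.card ι : ℝ)⁻¹ : ℝ) : 𝕜) := by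
  have hm : (Fintype.card ι : 𝕜) ≠ 0 := Nat.cast_ne_zero.2 Fintype.card_ne_zero
  have hxI : ⟪outerVec x x, idVec⟫_𝕜 = 1 := by
    rw [← inner_conj_symm, inner_idVec_outerVec_self, hx]; simp
  simp only [tracelessProjector, inner_sub_left, inner_sub_right, inner_smul_left,
    inner_smul_right, inner_outerVec_self, inner_idVec_outerVec_self, hy, hxI, inner_idVec_self]
  simp only [map_inv₀, map_natCast]
  push_cast
  field_simp
  ring

theorem tracelessProjector_mem_orthogonal (hx : ‖x‖ = 1) :
    tracelessProjector x ∈ (𝕜 ∙ (idVec : EuclideanSpace 𝕜 (ι × ι)))ᗮ := by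
  have hm : (Fintype.card ι : 𝕜) ≠ 0 := Nat.cast_ne_zero.2 Fintype.card_ne_zero
  rw [Submodule.mem_orthogonal_singleton_iff_inner_right, tracelessProjector, inner_sub_right,
    inner_smul_right, inner_idVec_outerVec_self, inner_idVec_self, hx, inv_mul_cancel₀ hm]
  simp

variable {κ : Type*} [Fintype κ] {b : κ → EuclideanSpace 𝕜 ι}

theorem norm_tracelessProjector_sq (hx : ‖x‖ = 1) :
    ‖tracelessProjector x‖ ^ 2 = 1 - (Fintype.card ι : ℝ)⁻¹ := by
  rw [← inner_self_eq_norm_sq (𝕜 := 𝕜), inner_tracelessProjector hx hx, RCLike.ofReal_re,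
    inner_self_eq_norm_sq_to_K, hx]
  simp

theorem norm_sum_tracelessProjector_sq (hb : ∀ j, ‖b j‖ = 1) :
    ‖∑ j, tracelessProjector (b j)‖ ^ 2 =
      ∑ j, ∑ k, (‖⟪b j, b k⟫_𝕜‖ ^ 2 - (Fintype.card ι : ℝ)⁻¹) := by
  rw [← inner_self_eq_norm_sq (𝕜 := 𝕜)]
  simp only [sum_inner, inner_sum, inner_tracelessProjector (hb _) (hb _), map_sum,
    RCLike.ofReal_re]
  exact sum_comm

theorem re_inner_tracelessProjector_sum (hb : ∀ j, ‖b j‖ = 1) (j : κ) :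
    RCLike.re ⟪tracelessProjector (b j), ∑ k, tracelessProjector (b k)⟫_𝕜 =
      ∑ k, (‖⟪b j, b k⟫_𝕜‖ ^ 2 - (Fintype.card ι : ℝ)⁻¹) := by
  simp only [inner_sum, inner_tracelessProjector (hb _) (hb _), map_sum, RCLike.ofReal_re]

theorem sq_card_mul_le_sum_sq_norm_inner_sub_inv (hb : ∀ j, ‖b j‖ = 1) :
    (Fintype.card κ * (1 - (Fintype.card ι : ℝ)⁻¹)) ^ 2 ≤
      ((Fintype.card ι : ℝ) ^ 2 - 1) *
        ∑ j, ∑ k, (‖⟪b j, b k⟫_𝕜‖ ^ 2 - (Fintype.card ι : ℝ)⁻¹) ^ 2 := by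
  let v : κ → (𝕜 ∙ (idVec : EuclideanSpace 𝕜 (ι × ι)))ᗮ := fun j =>
    ⟨tracelessProjector (b j), tracelessProjector_mem_orthogonal (hb j)⟩
  have hframe := sq_sum_norm_sq_le_finrank_mul_sum_norm_inner_sq (𝕜 := 𝕜) v
  have hdim : ((finrank 𝕜 (𝕜 ∙ (idVec : EuclideanSpace 𝕜 (ι × ι)))ᗮ : ℕ) : ℝ) =
      (Fintype.card ι : ℝ) ^ 2 - 1 := by
    rw [finrank_orthogonal_idVec, Nat.cast_sub (Nat.one_le_pow _ _ Fintype.card_pos)]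
    push_cast; ring
  simp only [v, Submodule.coe_norm, Submodule.coe_inner, norm_tracelessProjector_sq (hb _),
    inner_tracelessProjector (hb _) (hb _), RCLike.norm_ofReal, sq_abs, sum_const, card_univ,
    nsmul_eq_mul, hdim] at hframe
  exact hframe

end TracelessProjector

section OrthogonalityGraph

variable {𝕜 κ : Type*} [RCLike 𝕜] {d : ℕ}

def orthogonalityGraph (b : κ → EuclideanSpace 𝕜 (Fin d)) : SimpleGraph κ where
  Adj j k := j ≠ k ∧ ⟪b j, b k⟫_𝕜 = 0
  symm := ⟨fun _ _ h => ⟨h.1.symm, inner_eq_zero_symm.1 h.2⟩⟩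
  loopless := ⟨fun _ h => h.1 rfl⟩

variable [DecidableEq κ] {b : κ → EuclideanSpace 𝕜 (Fin d)} (hnorm : ∀ j, ‖b j‖ = 1)
  (hangles : ∀ j k, j ≠ k → ‖⟪b j, b k⟫_𝕜‖ ^ 2 = 0 ∨ ‖⟪b j, b k⟫_𝕜‖ ^ 2 = 1 / d)
include hnorm hangles

theorem norm_inner_sq_sub_inv_eq_ite [DecidableRel (orthogonalityGraph b).Adj] (j k : κ) :
    ‖⟪b j, b k⟫_𝕜‖ ^ 2 - (d : ℝ)⁻¹ = if j = k then 1 - (d : ℝ)⁻¹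
      else if (orthogonalityGraph b).Adj j k then -(d : ℝ)⁻¹ else 0 := by
  by_cases hjk : j = k
  · subst hjk
    rw [if_pos rfl, inner_self_eq_norm_sq_to_K, hnorm]
    simp
  · have hadj : (orthogonalityGraph b).Adj j k ↔ ‖⟪b j, b k⟫_𝕜‖ ^ 2 = 0 := by
      simp [orthogonalityGraph, hjk]
    rw [if_neg hjk]
    split_ifs with h
    · rw [hadj.1 h, zero_sub]
    · rcases hangles j k hjk with h0 | h1
      · exact absurd (hadj.2 h0) h
      · rw [h1, one_div, sub_self]

theorem norm_inner_sq_sub_inv_mul_add_inv (j k : κ) :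
    (‖⟪b j, b k⟫_𝕜‖ ^ 2 - (d : ℝ)⁻¹) * (‖⟪b j, b k⟫_𝕜‖ ^ 2 - (d : ℝ)⁻¹ + (d : ℝ)⁻¹) =
      if j = k then 1 - (d : ℝ)⁻¹ else 0 := by
  classical
  rw [norm_inner_sq_sub_inv_eq_ite hnorm hangles]
  split_ifs <;> ring

variable [Fintype κ]

theorem sum_sq_norm_inner_sub_inv_add_sum_div :
    ∑ j, ∑ k, (‖⟪b j, b k⟫_𝕜‖ ^ 2 - (d : ℝ)⁻¹) ^ 2 +
        (∑ j, ∑ k, (‖⟪b j, b k⟫_𝕜‖ ^ 2 - (d : ℝ)⁻¹)) / d =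
      Fintype.card κ * (1 - (d : ℝ)⁻¹) := calc
  _ = ∑ j, ∑ k, (‖⟪b j, b k⟫_𝕜‖ ^ 2 - (d : ℝ)⁻¹) *
        (‖⟪b j, b k⟫_𝕜‖ ^ 2 - (d : ℝ)⁻¹ + (d : ℝ)⁻¹) := by
      simp only [sum_div, ← sum_add_distrib]
      exact sum_congr rfl fun j _ => sum_congr rfl fun k _ => by ring
  _ = ∑ _j : κ, (1 - (d : ℝ)⁻¹) := by
      simp only [norm_inner_sq_sub_inv_mul_add_inv hnorm hangles, sum_ite_eq, mem_univ, if_true]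
  _ = Fintype.card κ * (1 - (d : ℝ)⁻¹) := by rw [sum_const, card_univ, nsmul_eq_mul]

theorem sum_tracelessProjector_eq_zero (hd : 1 ≤ d) (hcard : Fintype.card κ = d * (d + 1)) :
    ∑ j, tracelessProjector (b j) = 0 := by
  have : Nonempty (Fin d) := ⟨⟨0, hd⟩⟩
  have hd0 : (0 : ℝ) < d := by positivity
  set S := ∑ j, ∑ k, (‖⟪b j, b k⟫_𝕜‖ ^ 2 - (d : ℝ)⁻¹)
  set P := ∑ j, ∑ k, (‖⟪b j, b k⟫_𝕜‖ ^ 2 - (d : ℝ)⁻¹) ^ 2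
  set D : ℝ := (d : ℝ) ^ 2 - 1
  have hS : ‖∑ j, tracelessProjector (b j)‖ ^ 2 = S := by
    rw [norm_sum_tracelessProjector_sq hnorm, Fintype.card_fin]
  have hframe : D ^ 2 ≤ D * P := by
    have h := sq_card_mul_le_sum_sq_norm_inner_sub_inv hnorm
    simp only [Fintype.card_fin, hcard] at h
    convert h using 2
    push_cast; field_simp; ring
  have hPS : P + S / d = D := by
    rw [sum_sq_norm_inner_sub_inv_add_sum_div hnorm hangles, hcard]
    push_cast; field_simp; ring
  have hSnn : 0 ≤ S := hS ▸ sq_nonneg _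
  have hPnn : 0 ≤ P := sum_nonneg fun j _ => sum_nonneg fun k _ => sq_nonneg _
  have hDnn : 0 ≤ D := by nlinarith [(by exact_mod_cast hd : (1 : ℝ) ≤ d)]
  -- `hframe` and `hPS` give `D * (S / d) ≤ 0`; when `D = 0`, `hPS` alone gives `S / d = -P ≤ 0`.
  have ht : S / d = 0 := by
    have := div_nonneg hSnn hd0.le
    nlinarith [mul_nonneg this hPnn]
  have hS0 : S = 0 := by simpa [hd0.ne'] using ht
  simpa [hS0] using hS

theorem sum_norm_inner_sq_sub_inv [DecidableRel (orthogonalityGraph b).Adj] (j : κ) :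
    ∑ k, (‖⟪b j, b k⟫_𝕜‖ ^ 2 - (d : ℝ)⁻¹) =
      1 - (d : ℝ)⁻¹ - (orthogonalityGraph b).degree j * (d : ℝ)⁻¹ := by
  have hsplit : ∀ k, ‖⟪b j, b k⟫_𝕜‖ ^ 2 - (d : ℝ)⁻¹ = (if j = k then 1 - (d : ℝ)⁻¹ else 0) -
      if k ∈ (orthogonalityGraph b).neighborFinset j then (d : ℝ)⁻¹ else 0 := fun k => by
    rw [norm_inner_sq_sub_inv_eq_ite hnorm hangles]
    simp only [SimpleGraph.mem_neighborFinset]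
    split_ifs <;> simp_all
  simp only [hsplit, sum_sub_distrib, sum_ite_eq, mem_univ, if_true, sum_ite_mem, univ_inter,
    sum_const, SimpleGraph.card_neighborFinset_eq_degree, nsmul_eq_mul]

theorem orthogonalityGraph_isRegularOfDegree [DecidableRel (orthogonalityGraph b).Adj]
    (hd : 1 ≤ d) (hcard : Fintype.card κ = d * (d + 1)) :
    (orthogonalityGraph b).IsRegularOfDegree (d - 1) := by
  intro j
  have : Nonempty (Fin d) := ⟨⟨0, hd⟩⟩
  have h := re_inner_tracelessProjector_sum hnorm j
  rw [sum_tracelessProjector_eq_zero hnorm hangles hd hcard, inner_zero_right, map_zero,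
    Fintype.card_fin, sum_norm_inner_sq_sub_inv hnorm hangles] at h
  have hd0 : (d : ℝ) ≠ 0 := by positivity
  have : ((orthogonalityGraph b).degree j : ℝ) = d - 1 := by
    field_simp at h; linarith
  rw [← Nat.cast_inj (R := ℝ), this, Nat.cast_sub hd, Nat.cast_one]

end OrthogonalityGraph

/-- Let `d ≥ 1`, `n = d(d+1)`, and let `b 1, …, b n` be unit vectors in `ℂ^d`
such that for every `j ≠ k`, `|⟨b j, b k⟩|²` equals either `0` or `1/d`.  Then for every index
`j`, the number of indices `k ≠ j` with `⟨b j, b k⟩ = 0` is exactly `d − 1`: the orthogonality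
graph is `(d−1)`-regular. -/
theorem orthogonality_graph_regular
    (d n : ℕ) (hd : 1 ≤ d) (hn : n = d * (d + 1))
    (b : Fin n → EuclideanSpace ℂ (Fin d))
    (hnorm : ∀ j, ‖b j‖ = 1)
    (hangles : ∀ j k, j ≠ k →
      ‖(inner ℂ (b j) (b k) : ℂ)‖ ^ 2 = 0 ∨ ‖(inner ℂ (b j) (b k) : ℂ)‖ ^ 2 = 1 / d) :
    ∀ j, {k | k ≠ j ∧ (inner ℂ (b j) (b k) : ℂ) = 0}.ncard = d - 1 := by
  classical
  intro j
  have hcard : Fintype.card (Fin n) = d * (d + 1) := by rw [Fintype.card_fin, hn]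
  have hneighbors : {k | k ≠ j ∧ (inner ℂ (b j) (b k) : ℂ) = 0} =
      (orthogonalityGraph b).neighborSet j := by
    ext k
    simp [orthogonalityGraph, ne_comm]
  rw [hneighbors, ← SimpleGraph.coe_neighborFinset, Set.ncard_coe_finset,
    SimpleGraph.card_neighborFinset_eq_degree]
  exact orthogonalityGraph_isRegularOfDegree hnorm hangles hd hcard j
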